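/- For l∈{1,2}, let φ_1(σ) = −(√3/π)e^{−(9/5)σ}/(1+2cosh(2σ)) and φ_2(σ) = −(√3/π)e^{−(3/5)σ}/(1+2cosh(2σ)). Then, with ω_5 = e^{2πil/5}, for all θ avoiding the poles (θ ≠ ±inπ/3, n∈Z): e^{−2πil/5}φ_l(θ + iπ/3) + e^{2πil/5}φ_l(θ − iπ/3) − φ_l(θ) = 0. -/
import Mathlib


open Complex

/-- The TBA kernels `φ_l` for `l = 1, 2`: exponent `-9σ/5` for `l = 1`
and `-3σ/5` for `l = 2`, i.e. `-(3(5-2l)/5)σ`. -/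
noncomputable def φ (l : ℕ) (σ : ℂ) : ℂ :=
  -((Real.sqrt 3 / Real.pi : ℝ) : ℂ) *
    Complex.exp (-(3 * (5 - 2 * (l : ℂ)) / 5) * σ) / (1 + 2 * Complex.cosh (2 * σ))

lemma aux_den (z : ℂ) (hz : ∀ n : ℤ, z ≠ (n : ℂ) * (Real.pi : ℂ) / 3 * I) :
    1 + 2 * Complex.cosh (2 * z) ≠ 0 := by
  intro h
  have hx := Complex.exp_ne_zero (2*z)
  have hq : Complex.exp (2*z) ^ 2 + Complex.exp (2*z) + 1 = 0 := by
    rw [Complex.two_cosh, Complex.exp_neg] at h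
    field_simp at h
    linear_combination h
  have h3 : Complex.exp (2*z) ^ 3 = 1 := by
    linear_combination (Complex.exp (2*z) - 1) * hq
  have h6 : Complex.exp (6*z) = 1 := by
    rw [show (6:ℂ)*z = ((3:ℕ):ℂ)*(2*z) by push_cast; ring, Complex.exp_nat_mul]
    exact h3
  obtain ⟨n, hn⟩ := Complex.exp_eq_one_iff.mp h6
  exact hz n (by linear_combination hn/6)

lemma aux_cosh : Complex.cosh ((2*(Real.pi:ℂ)/3) * I) = -(1/2) := by
  rw [Complex.cosh_mul_I, show (2*(Real.pi:ℂ)/3) = ((2*Real.pi/3 : ℝ) : ℂ) by push_cast; ring,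
    ← Complex.ofReal_cos, show (2*Real.pi/3 : ℝ) = Real.pi - Real.pi/3 by ring,
    Real.cos_pi_sub, Real.cos_pi_div_three]
  norm_num

lemma aux_sinh_sq : Complex.sinh ((2*(Real.pi:ℂ)/3) * I) ^ 2 = -(3/4) := by
  rw [Complex.sinh_mul_I, show (2*(Real.pi:ℂ)/3) = ((2*Real.pi/3 : ℝ) : ℂ) by push_cast; ring,
    ← Complex.ofReal_sin, show (2*Real.pi/3 : ℝ) = Real.pi - Real.pi/3 by ring,
    Real.sin_pi_sub, Real.sin_pi_div_three]
  have h3 : ((Real.sqrt 3 : ℝ) : ℂ)^2 = 3 := by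
    rw [show ((Real.sqrt 3 : ℝ) : ℂ)^2 = ((Real.sqrt 3 ^2 : ℝ) : ℂ) by push_cast; ring,
      Real.sq_sqrt (by norm_num : (0:ℝ) ≤ 3)]
    norm_num
  push_cast
  linear_combination (I^2/4) * h3 + (3/4) * Complex.I_sq

lemma aux_key (θ : ℂ) :
    (1 + 2*Complex.cosh (2*(θ + (Real.pi:ℂ)*I/3))) * (1 + 2*Complex.cosh (2*(θ - (Real.pi:ℂ)*I/3)))
    + (1 + 2*Complex.cosh (2*θ)) *
      ((1 + 2*Complex.cosh (2*(θ + (Real.pi:ℂ)*I/3))) + (1 + 2*Complex.cosh (2*(θ - (Real.pi:ℂ)*I/3)))) = 0 := by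
  rw [show 2*(θ + (Real.pi:ℂ)*I/3) = 2*θ + (2*(Real.pi:ℂ)/3)*I by ring,
    show 2*(θ - (Real.pi:ℂ)*I/3) = 2*θ - (2*(Real.pi:ℂ)/3)*I by ring,
    Complex.cosh_add, Complex.cosh_sub, aux_cosh]
  linear_combination (-4*Complex.sinh (2*θ)^2) * aux_sinh_sq
    + (-3) * Complex.cosh_sq_sub_sinh_sq (2*θ)

/-- The kernels `φ_l`, `l = 1, 2`, solve the twisted homogeneous shift equation. -/
theorem phil_shift_equation (l : ℕ) (hl : l = 1 ∨ l = 2) (θ : ℂ)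
    (hθ : ∀ n : ℤ, θ ≠ (n : ℂ) * (Real.pi : ℂ) / 3 * I ∧
      θ ≠ -((n : ℂ) * (Real.pi : ℂ) / 3 * I)) :
    Complex.exp (-(2 * (Real.pi : ℂ) * I * l / 5)) * φ l (θ + (Real.pi : ℂ) * I / 3)
      + Complex.exp (2 * (Real.pi : ℂ) * I * l / 5) * φ l (θ - (Real.pi : ℂ) * I / 3)
      - φ l θ = 0 := by
  have hD : 1 + 2 * Complex.cosh (2 * θ) ≠ 0 :=
    aux_den θ (fun n => (hθ n).1)
  have hDp : 1 + 2 * Complex.cosh (2 * (θ + (Real.pi:ℂ)*I/3)) ≠ 0 := by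
    refine aux_den _ (fun n h => (hθ (n-1)).1 ?_)
    push_cast at h ⊢; linear_combination h
  have hDm : 1 + 2 * Complex.cosh (2 * (θ - (Real.pi:ℂ)*I/3)) ≠ 0 := by
    refine aux_den _ (fun n h => (hθ (n+1)).1 ?_)
    push_cast at h ⊢; linear_combination h
  have hkey := aux_key θ
  have main : ∀ k : ℂ, Complex.exp (-(2 * (Real.pi : ℂ) * I * k / 5)) *
        Complex.exp (-(3 * (5 - 2 * k) / 5) * ((Real.pi:ℂ)*I/3)) = -1 →
      Complex.exp (2 * (Real.pi : ℂ) * I * k / 5) *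
        Complex.exp ((3 * (5 - 2 * k) / 5) * ((Real.pi:ℂ)*I/3)) = -1 →
      Complex.exp (-(2 * (Real.pi : ℂ) * I * k / 5)) *
        (-((Real.sqrt 3 / Real.pi : ℝ) : ℂ) *
          Complex.exp (-(3 * (5 - 2 * k) / 5) * (θ + (Real.pi:ℂ)*I/3)) /
          (1 + 2 * Complex.cosh (2 * (θ + (Real.pi:ℂ)*I/3))))
      + Complex.exp (2 * (Real.pi : ℂ) * I * k / 5) *
        (-((Real.sqrt 3 / Real.pi : ℝ) : ℂ) *
          Complex.exp (-(3 * (5 - 2 * k) / 5) * (θ - (Real.pi:ℂ)*I/3)) /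
          (1 + 2 * Complex.cosh (2 * (θ - (Real.pi:ℂ)*I/3))))
      - (-((Real.sqrt 3 / Real.pi : ℝ) : ℂ) *
          Complex.exp (-(3 * (5 - 2 * k) / 5) * θ) /
          (1 + 2 * Complex.cosh (2 * θ))) = 0 := by
    intro k hk1 hk2
    have hE1 : Complex.exp (-(2 * (Real.pi : ℂ) * I * k / 5)) *
        Complex.exp (-(3 * (5 - 2 * k) / 5) * (θ + (Real.pi:ℂ)*I/3))
        = -Complex.exp (-(3 * (5 - 2 * k) / 5) * θ) := by
      rw [show -(3 * (5 - 2 * k) / 5) * (θ + (Real.pi:ℂ)*I/3)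
          = -(3 * (5 - 2 * k) / 5) * θ + -(3 * (5 - 2 * k) / 5) * ((Real.pi:ℂ)*I/3) by ring,
        Complex.exp_add, show ∀ a b c : ℂ, a * (b * c) = b * (a * c) from fun a b c => by ring,
        hk1]
      ring
    have hE2 : Complex.exp (2 * (Real.pi : ℂ) * I * k / 5) *
        Complex.exp (-(3 * (5 - 2 * k) / 5) * (θ - (Real.pi:ℂ)*I/3))
        = -Complex.exp (-(3 * (5 - 2 * k) / 5) * θ) := by
      rw [show -(3 * (5 - 2 * k) / 5) * (θ - (Real.pi:ℂ)*I/3)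
          = -(3 * (5 - 2 * k) / 5) * θ + (3 * (5 - 2 * k) / 5) * ((Real.pi:ℂ)*I/3) by ring,
        Complex.exp_add, show ∀ a b c : ℂ, a * (b * c) = b * (a * c) from fun a b c => by ring,
        hk2]
      ring
    set c : ℂ := ((Real.sqrt 3 / Real.pi : ℝ) : ℂ) with hc
    set D : ℂ := 1 + 2 * Complex.cosh (2 * θ) with hDdef
    set Dp : ℂ := 1 + 2 * Complex.cosh (2 * (θ + (Real.pi:ℂ)*I/3)) with hDpdef
    set Dm : ℂ := 1 + 2 * Complex.cosh (2 * (θ - (Real.pi:ℂ)*I/3)) with hDmdef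
    set T1 : ℂ := Complex.exp (-(2 * (Real.pi : ℂ) * I * k / 5)) with hT1
    set T2 : ℂ := Complex.exp (2 * (Real.pi : ℂ) * I * k / 5) with hT2
    set Ep : ℂ := Complex.exp (-(3 * (5 - 2 * k) / 5) * (θ + (Real.pi:ℂ)*I/3)) with hEp
    set Em : ℂ := Complex.exp (-(3 * (5 - 2 * k) / 5) * (θ - (Real.pi:ℂ)*I/3)) with hEm
    set E0 : ℂ := Complex.exp (-(3 * (5 - 2 * k) / 5) * θ) with hE0
    field_simp
    linear_combination (-c*D*Dm) * hE1 + (-c*D*Dp) * hE2 + (c*E0) * hkey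
  have hpi : ∀ r : ℂ, Complex.exp ((Real.pi:ℂ) * I * r) = -1 → True := fun _ _ => trivial
  rcases hl with rfl | rfl
  · simp only [φ, Nat.cast_one]
    refine main 1 ?_ ?_
    · rw [← Complex.exp_add, show -(2 * (Real.pi:ℂ) * I * 1 / 5) +
        -(3 * (5 - 2 * (1:ℂ)) / 5) * ((Real.pi:ℂ)*I/3) = -((Real.pi:ℂ)*I) by ring,
        Complex.exp_neg, Complex.exp_pi_mul_I]
      norm_num
    · rw [← Complex.exp_add, show 2 * (Real.pi:ℂ) * I * 1 / 5 +
        (3 * (5 - 2 * (1:ℂ)) / 5) * ((Real.pi:ℂ)*I/3) = (Real.pi:ℂ)*I by ring,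
        Complex.exp_pi_mul_I]
  · simp only [φ, Nat.cast_ofNat]
    refine main 2 ?_ ?_
    · rw [← Complex.exp_add, show -(2 * (Real.pi:ℂ) * I * 2 / 5) +
        -(3 * (5 - 2 * (2:ℂ)) / 5) * ((Real.pi:ℂ)*I/3) = -((Real.pi:ℂ)*I) by ring,
        Complex.exp_neg, Complex.exp_pi_mul_I]
      norm_num
    · rw [← Complex.exp_add, show 2 * (Real.pi:ℂ) * I * 2 / 5 +
        (3 * (5 - 2 * (2:ℂ)) / 5) * ((Real.pi:ℂ)*I/3) = (Real.pi:ℂ)*I by ring,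
        Complex.exp_pi_mul_I]
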